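/- (Key intermediate inequality in the proof of Lemma 2.) Let ε > 0, κ ≥ 0, δ ∈ [0,1). Assume 𝒜 satisfies the (δ, r+r*)-RIP property, and let X̂ ∈ ℝ^{n×r} satisfy: (i) σ_r(X̂) ≤ √((ε+κ/2)/(1+δ)), (ii) ‖𝐗̂ᵀ𝐇e‖ ≤ (2ε+κ)‖X̂‖₂, and (iii) 2·I_r ⊗ mat_S(𝐇e) + 𝐗̂ᵀ𝐇𝐗̂ ⪰ −(2ε+κ)·I_{nr}. Then (1−δ)·‖X̂X̂ᵀ − M*‖_F² ≤ (ε + κ/2)·‖X̂‖_F² + (3ε + 3κ/2)·tr(M*). -/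

import Mathlib

open scoped BigOperators
open Matrix

noncomputable section

/-- Euclidean norm of a real vector indexed by `Fin k`. -/
def enormE {k : ℕ} (v : Fin k → ℝ) : ℝ := Real.sqrt (∑ i, (v i) ^ 2)

/-- Frobenius norm of a real matrix. -/
def fnorm {a b : ℕ} (M : Matrix (Fin a) (Fin b) ℝ) : ℝ :=
  Real.sqrt (∑ i, ∑ j, (M i j) ^ 2)

/-- Frobenius inner product of two real matrices. -/
def finner {a b : ℕ} (M N : Matrix (Fin a) (Fin b) ℝ) : ℝ := ∑ i, ∑ j, M i j * N i j

open Classical in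
/-- The `i`-th largest eigenvalue (`0`-indexed, i.e. `eigval M 0` is the largest
eigenvalue and `eigval M ⟨k-1,_⟩` the smallest) of a real symmetric matrix
(junk value `0` if the matrix is not symmetric). -/
def eigval {k : ℕ} (M : Matrix (Fin k) (Fin k) ℝ) (i : Fin k) : ℝ :=
  if h : M.IsHermitian then
    h.eigenvalues (Tuple.sort h.eigenvalues ⟨k - 1 - i.val, by have := i.isLt; omega⟩)
  else 0

/-- Spectral norm of a real matrix: `√(λ₁(XᵀX))`. -/
def specNorm {a b : ℕ} (X : Matrix (Fin a) (Fin b) ℝ) : ℝ :=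
  if hb : 0 < b then Real.sqrt (eigval (Xᵀ * X) ⟨0, hb⟩) else 0

/-- Smallest singular value `σ_b(X)` of `X ∈ ℝ^{a×b}`: the square root of the
smallest eigenvalue of `XᵀX`. -/
def sigmaMin {a b : ℕ} (X : Matrix (Fin a) (Fin b) ℝ) : ℝ :=
  if hb : 0 < b then Real.sqrt (eigval (Xᵀ * X) ⟨b - 1, by omega⟩) else 0

/-- Vectorization of a square matrix. -/
def vecSq {n : ℕ} (M : Matrix (Fin n) (Fin n) ℝ) : Fin (n * n) → ℝ :=
  fun k => M (finProdFinEquiv.symm k).1 (finProdFinEquiv.symm k).2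

/-- Vectorization of an `n × r` matrix. -/
def vecR {n r : ℕ} (U : Matrix (Fin n) (Fin r) ℝ) : Fin (n * r) → ℝ :=
  fun k => U (finProdFinEquiv.symm k).1 (finProdFinEquiv.symm k).2

/-- `mat_S(v) = (V + Vᵀ)/2` where `vec V = v`. -/
def matS {n : ℕ} (v : Fin (n * n) → ℝ) : Matrix (Fin n) (Fin n) ℝ :=
  (1 / 2 : ℝ) • ((Matrix.of fun i j => v (finProdFinEquiv (i, j))) +
    (Matrix.of fun i j => v (finProdFinEquiv (i, j)))ᵀ)

/-- The sensing operator `𝒜(M) = (⟨A₁,M⟩, …, ⟨A_m,M⟩)`. -/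
def calA {n m : ℕ} (A : Fin m → Matrix (Fin n) (Fin n) ℝ)
    (M : Matrix (Fin n) (Fin n) ℝ) : Fin m → ℝ := fun i => finner (A i) M

/-- Matrix representation `𝐀 ∈ ℝ^{m×n²}` of `𝒜`, satisfying `𝐀 ⬝ vec M = 𝒜(M)`. -/
def bigA {n m : ℕ} (A : Fin m → Matrix (Fin n) (Fin n) ℝ) :
    Matrix (Fin m) (Fin (n * n)) ℝ := Matrix.of fun i k => vecSq (A i) k

/-- `𝒜` satisfies the `(δ, g)`-RIP property. -/
def RIP {n m : ℕ} (A : Fin m → Matrix (Fin n) (Fin n) ℝ) (δ : ℝ) (g : ℕ) : Prop :=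
  ∀ M : Matrix (Fin n) (Fin n) ℝ, M.rank ≤ g →
    (1 - δ) * fnorm M ^ 2 ≤ enormE (calA A M) ^ 2 ∧
      enormE (calA A M) ^ 2 ≤ (1 + δ) * fnorm M ^ 2

/-- The matrix `𝐗̂ ∈ ℝ^{n² × nr}` satisfying `𝐗̂ ⬝ vec U = vec (X̂Uᵀ + UX̂ᵀ)`. -/
def bigX {n r : ℕ} (X : Matrix (Fin n) (Fin r) ℝ) :
    Matrix (Fin (n * n)) (Fin (n * r)) ℝ :=
  Matrix.of fun k l =>
    (if (finProdFinEquiv.symm k).2 = (finProdFinEquiv.symm l).1 then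
      X (finProdFinEquiv.symm k).1 (finProdFinEquiv.symm l).2 else 0) +
    (if (finProdFinEquiv.symm k).1 = (finProdFinEquiv.symm l).1 then
      X (finProdFinEquiv.symm k).2 (finProdFinEquiv.symm l).2 else 0)

/-- The Kronecker product `I_r ⊗ G`, realized as an operator on vectorized
`n × r` matrices (it sends `vec U` to `vec (G * U)`). -/
def kronIdR {n : ℕ} (r : ℕ) (G : Matrix (Fin n) (Fin n) ℝ) :
    Matrix (Fin (n * r)) (Fin (n * r)) ℝ :=
  Matrix.of fun k l =>
    if (finProdFinEquiv.symm k).2 = (finProdFinEquiv.symm l).2 then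
      G (finProdFinEquiv.symm k).1 (finProdFinEquiv.symm l).1 else 0

/-- Loewner order: `A ⪯ B` iff `B - A` is positive semidefinite. -/
def PSDle {k : ℕ} (A B : Matrix (Fin k) (Fin k) ℝ) : Prop := (B - A).PosSemidef

/-- The objective `f(X) = ½‖𝒜(XXᵀ) − b + w‖²` with `b = 𝒜(M*)`. -/
def fobj {n m r : ℕ} (A : Fin m → Matrix (Fin n) (Fin n) ℝ)
    (Mstar : Matrix (Fin n) (Fin n) ℝ) (w : Fin m → ℝ)
    (X : Matrix (Fin n) (Fin r) ℝ) : ℝ :=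
  (1 / 2) * enormE (fun i => calA A (X * Xᵀ) i - calA A Mstar i + w i) ^ 2

/-- View a point of Euclidean space as an `n × r` matrix. -/
def toMat {n r : ℕ} (x : EuclideanSpace ℝ (Fin n × Fin r)) : Matrix (Fin n) (Fin r) ℝ :=
  Matrix.of fun i j => x (i, j)

/-- View an `n × r` matrix as a point of Euclidean space (whose inner product is
the Frobenius inner product). -/
def vecE {n r : ℕ} (X : Matrix (Fin n) (Fin r) ℝ) : EuclideanSpace ℝ (Fin n × Fin r) :=
  WithLp.toLp 2 (fun p => X p.1 p.2)

/-- The objective as a function on Euclidean space. -/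
def fE {n m : ℕ} (r : ℕ) (A : Fin m → Matrix (Fin n) (Fin n) ℝ)
    (Mstar : Matrix (Fin n) (Fin n) ℝ) (w : Fin m → ℝ) :
    EuclideanSpace ℝ (Fin n × Fin r) → ℝ :=
  fun x => fobj A Mstar w (toMat x)

/-- Hessian quadratic form `D²f(X)[U, U]` (second Fréchet derivative). -/
def hessQF {n m : ℕ} (r : ℕ) (A : Fin m → Matrix (Fin n) (Fin n) ℝ)
    (Mstar : Matrix (Fin n) (Fin n) ℝ) (w : Fin m → ℝ)
    (X U : Matrix (Fin n) (Fin r) ℝ) : ℝ :=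
  iteratedFDeriv ℝ 2 (fE r A Mstar w) (vecE X) ![vecE U, vecE U]

/-- Gradient `∇f(X)` with respect to the Frobenius inner product, as a matrix. -/
def gradf {n m : ℕ} (r : ℕ) (A : Fin m → Matrix (Fin n) (Fin n) ℝ)
    (Mstar : Matrix (Fin n) (Fin n) ℝ) (w : Fin m → ℝ)
    (X : Matrix (Fin n) (Fin r) ℝ) : Matrix (Fin n) (Fin r) ℝ :=
  toMat (gradient (fE r A Mstar w) (vecE X))

/-!
Write `E = X̂X̂ᵀ − M*` and `G = mat_S(𝐇e)`. As `E` is symmetric of rank at most `r + r*`, the RIP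
lower bound gives `(1−δ)‖E‖_F² ≤ ‖𝒜(E)‖² = ⟨G, E⟩ = ⟨G, X̂X̂ᵀ⟩ − ⟨G, M*⟩`.

The first-order condition reads `𝐗̂ᵀ𝐇e = vec(2GX̂)`, so
`⟨G, X̂X̂ᵀ⟩ = ⟨GX̂, X̂⟩ ≤ ‖GX̂‖_F ‖X̂‖_F ≤ (ε + κ/2)‖X̂‖₂‖X̂‖_F ≤ (ε + κ/2)‖X̂‖_F²`.

The second-order condition is tested on `U = z uᵀ`, with `u` a unit eigenvector of `X̂ᵀX̂` for the
eigenvalue `σ_r(X̂)²`. Then `X̂Uᵀ + UX̂ᵀ = (X̂u)zᵀ + z(X̂u)ᵀ` has rank at most `2` and squared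
Frobenius norm at most `4σ_r(X̂)²‖z‖²`, so the RIP upper bound turns the condition into
`zᵀGz ≥ −(3ε + 3κ/2)‖z‖²`. Thus `G + (3ε + 3κ/2)I ⪰ 0`, and pairing with `M* ⪰ 0` gives
`−⟨G, M*⟩ ≤ (3ε + 3κ/2) tr M*`.
-/

lemma transpose_mul_self_mulVec_dotProduct {ι κ R : Type*} [Fintype ι] [Fintype κ] [CommRing R]
    (B : Matrix ι κ R) (v w : κ → R) : ((Bᵀ * B) *ᵥ v) ⬝ᵥ w = (B *ᵥ v) ⬝ᵥ (B *ᵥ w) := by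
  rw [← mulVec_mulVec, mulVec_transpose, ← dotProduct_mulVec]

namespace Matrix

variable {ι κ K : Type*} [Fintype κ] [Field K]

lemma rank_add_le (P Q : Matrix ι κ K) : (P + Q).rank ≤ P.rank + Q.rank := by
  rw [rank, rank, rank, mulVecLin_add]
  exact (Submodule.finrank_mono (LinearMap.range_add_le _ _)).trans
    (Submodule.finrank_add_le_finrank_add_finrank _ _)

lemma rank_neg (P : Matrix ι κ K) : (-P).rank = P.rank := by
  have hneg : (-P).mulVecLin = -P.mulVecLin := LinearMap.ext fun v => neg_mulVec v P
  rw [rank, rank, hneg, LinearMap.range_neg]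

lemma rank_sub_le (P Q : Matrix ι κ K) : (P - Q).rank ≤ P.rank + Q.rank := by
  simpa [sub_eq_add_neg, rank_neg] using rank_add_le P (-Q)

lemma rank_vecMulVec_add_vecMulVec_le (x y : ι → K) (u w : κ → K) :
    (vecMulVec x u + vecMulVec y w).rank ≤ 2 :=
  (rank_add_le _ _).trans (add_le_add (rank_vecMulVec_le _ _) (rank_vecMulVec_le _ _))

end Matrix

section Vectorization

lemma sum_finProdFinEquiv {M : Type*} [AddCommMonoid M] {a b : ℕ} (F : Fin (a * b) → M) :
    ∑ k, F k = ∑ i : Fin a, ∑ j : Fin b, F (finProdFinEquiv (i, j)) := by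
  rw [← finProdFinEquiv.sum_comp, Fintype.sum_prod_type]

variable {n r : ℕ}

@[simp] lemma vecR_finProdFinEquiv (U : Matrix (Fin n) (Fin r) ℝ) (i : Fin n) (j : Fin r) :
    vecR U (finProdFinEquiv (i, j)) = U i j := by
  simp [vecR]

lemma vecSq_eq_vecR (M : Matrix (Fin n) (Fin n) ℝ) : vecSq M = vecR M := rfl

lemma vecR_dotProduct_vecR (U V : Matrix (Fin n) (Fin r) ℝ) :
    vecR U ⬝ᵥ vecR V = finner U V := by
  simp [dotProduct, sum_finProdFinEquiv, finner]

lemma enormE_sq {k : ℕ} (v : Fin k → ℝ) : enormE v ^ 2 = v ⬝ᵥ v := by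
  rw [enormE, Real.sq_sqrt (by positivity)]
  simp [dotProduct, sq]

lemma fnorm_sq {a b : ℕ} (M : Matrix (Fin a) (Fin b) ℝ) : fnorm M ^ 2 = finner M M := by
  rw [fnorm, Real.sq_sqrt (by positivity)]
  simp [finner, sq]

lemma enormE_vecR (U : Matrix (Fin n) (Fin r) ℝ) : enormE (vecR U) = fnorm U := by
  rw [enormE, fnorm, sum_finProdFinEquiv]
  simp

lemma calA_eq_bigA_mulVec {m : ℕ} (A : Fin m → Matrix (Fin n) (Fin n) ℝ)
    (M : Matrix (Fin n) (Fin n) ℝ) : calA A M = bigA A *ᵥ vecSq M := by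
  funext i
  exact (vecR_dotProduct_vecR (A i) M).symm

lemma bigX_mulVec_vecR (X U : Matrix (Fin n) (Fin r) ℝ) :
    bigX X *ᵥ vecR U = vecSq (X * Uᵀ + U * Xᵀ) := by
  funext k
  obtain ⟨⟨i, j⟩, rfl⟩ := finProdFinEquiv.surjective k
  simp only [mulVec, dotProduct, sum_finProdFinEquiv, vecSq_eq_vecR, vecR_finProdFinEquiv, bigX,
    of_apply, Equiv.symm_apply_apply, Matrix.add_apply, mul_apply, transpose_apply, add_mul,
    ite_mul, zero_mul, Finset.sum_add_distrib]
  rw [Finset.sum_comm, Finset.sum_comm (γ := Fin n)]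
  simp [mul_comm]

lemma kronIdR_mulVec_vecR (G : Matrix (Fin n) (Fin n) ℝ) (U : Matrix (Fin n) (Fin r) ℝ) :
    kronIdR r G *ᵥ vecR U = vecR (G * U) := by
  funext k
  obtain ⟨⟨i, j⟩, rfl⟩ := finProdFinEquiv.surjective k
  simp only [mulVec, dotProduct, sum_finProdFinEquiv, vecR_finProdFinEquiv, kronIdR, of_apply,
    Equiv.symm_apply_apply, mul_apply, ite_mul, zero_mul]
  rw [Finset.sum_comm]
  simp

lemma matS_apply (v : Fin (n * n) → ℝ) (i j : Fin n) :
    matS v i j = (v (finProdFinEquiv (i, j)) + v (finProdFinEquiv (j, i))) / 2 := by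
  simp [matS]
  ring

lemma matS_transpose (v : Fin (n * n) → ℝ) : (matS v)ᵀ = matS v := by
  ext i j
  rw [transpose_apply, matS_apply, matS_apply, add_comm]

lemma bigX_transpose_mulVec (X : Matrix (Fin n) (Fin r) ℝ) (v : Fin (n * n) → ℝ) :
    (bigX X)ᵀ *ᵥ v = vecR ((2 : ℝ) • (matS v * X)) := by
  funext l
  obtain ⟨⟨i, j⟩, rfl⟩ := finProdFinEquiv.surjective l
  simp only [mulVec, dotProduct, sum_finProdFinEquiv, vecR_finProdFinEquiv, bigX, transpose_apply,
    of_apply, Equiv.symm_apply_apply, Matrix.smul_apply, mul_apply, matS_apply, add_mul, ite_mul,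
    zero_mul, Finset.sum_add_distrib, smul_eq_mul, Finset.mul_sum]
  rw [Finset.sum_comm (γ := Fin n) (f := fun a b => if a = i then _ else _)]
  simp only [Finset.sum_ite_eq', Finset.mem_univ, if_true]
  rw [← Finset.sum_add_distrib]
  exact Finset.sum_congr rfl fun a _ => by ring

lemma finner_matS_of_transpose_eq (v : Fin (n * n) → ℝ) {E : Matrix (Fin n) (Fin n) ℝ}
    (hE : Eᵀ = E) : finner (matS v) E = v ⬝ᵥ vecSq E := by
  rw [vecSq_eq_vecR, dotProduct, sum_finProdFinEquiv]
  have hswap : ∑ i, ∑ j, v (finProdFinEquiv (j, i)) * E i j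
      = ∑ i, ∑ j, v (finProdFinEquiv (i, j)) * E i j := by
    rw [Finset.sum_comm]
    exact Finset.sum_congr rfl fun i _ => Finset.sum_congr rfl fun j _ => by
      rw [← congrFun (congrFun hE j) i, transpose_apply]
  simp only [finner, matS_apply, vecR_finProdFinEquiv, add_div, add_mul, Finset.sum_add_distrib,
    div_mul_eq_mul_div, ← Finset.sum_div, hswap]
  ring

end Vectorization

section Frobenius

variable {a b : ℕ}

lemma fnorm_nonneg (M : Matrix (Fin a) (Fin b) ℝ) : 0 ≤ fnorm M := Real.sqrt_nonneg _

lemma finner_add_left (P Q R : Matrix (Fin a) (Fin b) ℝ) :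
    finner (P + Q) R = finner P R + finner Q R := by
  simp [finner, add_mul, Finset.sum_add_distrib]

lemma finner_add_right (P Q R : Matrix (Fin a) (Fin b) ℝ) :
    finner P (Q + R) = finner P Q + finner P R := by
  simp [finner, mul_add, Finset.sum_add_distrib]

lemma finner_sub_right (P Q R : Matrix (Fin a) (Fin b) ℝ) :
    finner P (Q - R) = finner P Q - finner P R := by
  simp [finner, mul_sub, Finset.sum_sub_distrib]

lemma finner_vecMulVec (x y : Fin a → ℝ) (u w : Fin b → ℝ) :
    finner (vecMulVec x u) (vecMulVec y w) = (x ⬝ᵥ y) * (u ⬝ᵥ w) := by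
  simp only [finner, vecMulVec_apply, dotProduct, Finset.sum_mul_sum]
  exact Finset.sum_congr rfl fun i _ => Finset.sum_congr rfl fun j _ => by ring

lemma finner_mul_transpose (G : Matrix (Fin a) (Fin a) ℝ) (X : Matrix (Fin a) (Fin b) ℝ) :
    finner G (X * Xᵀ) = finner (G * X) X := by
  simp only [finner, mul_apply, transpose_apply, Finset.mul_sum, Finset.sum_mul]
  refine Finset.sum_congr rfl fun i _ => ?_
  rw [Finset.sum_comm]
  exact Finset.sum_congr rfl fun k _ => Finset.sum_congr rfl fun j _ => by ring

lemma finner_le_fnorm_mul_fnorm (P Q : Matrix (Fin a) (Fin b) ℝ) :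
    finner P Q ≤ fnorm P * fnorm Q := by
  simpa [finner, fnorm, Fintype.sum_prod_type] using
    Real.sum_mul_le_sqrt_mul_sqrt Finset.univ (fun p : Fin a × Fin b => P p.1 p.2)
      (fun p => Q p.1 p.2)

lemma fnorm_smul (c : ℝ) (M : Matrix (Fin a) (Fin b) ℝ) : fnorm (c • M) = |c| * fnorm M := by
  simp only [fnorm, Matrix.smul_apply, smul_eq_mul, mul_pow, ← Finset.mul_sum]
  rw [Real.sqrt_mul (sq_nonneg c), Real.sqrt_sq_eq_abs]

lemma finner_add_smul_one (G M : Matrix (Fin a) (Fin a) ℝ) (c : ℝ) :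
    finner (G + c • 1) M = finner G M + c * M.trace := by
  simp [finner, one_apply, add_mul, Finset.sum_add_distrib, trace, Finset.mul_sum]

lemma finner_eq_trace_transpose_mul (P Q : Matrix (Fin a) (Fin b) ℝ) :
    finner P Q = (Pᵀ * Q).trace := by
  simp only [finner, trace, diag, mul_apply, transpose_apply]
  exact Finset.sum_comm

open scoped MatrixOrder in
lemma finner_nonneg_of_posSemidef {P Q : Matrix (Fin a) (Fin a) ℝ} (hP : P.PosSemidef)
    (hQ : Q.PosSemidef) : 0 ≤ finner P Q := by
  obtain ⟨B, rfl⟩ := CStarAlgebra.nonneg_iff_eq_star_mul_self.mp hQ.nonneg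
  have hPt : Pᵀ = P := by simpa using hP.1.eq
  rw [finner_eq_trace_transpose_mul, hPt, star_eq_conjTranspose, ← Matrix.mul_assoc,
    trace_mul_comm, ← Matrix.mul_assoc]
  exact (hP.mul_mul_conjTranspose_same B).trace_nonneg

lemma fnorm_sq_vecMulVec_add_vecMulVec_le (x y : Fin a → ℝ) :
    fnorm (vecMulVec x y + vecMulVec y x) ^ 2 ≤ 4 * (x ⬝ᵥ x) * (y ⬝ᵥ y) := by
  have hCS : (x ⬝ᵥ y) ^ 2 ≤ (x ⬝ᵥ x) * (y ⬝ᵥ y) := by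
    simpa [dotProduct, sq] using Finset.sum_mul_sq_le_sq_mul_sq Finset.univ x y
  rw [fnorm_sq, finner_add_left, finner_add_right, finner_add_right, finner_vecMulVec,
    finner_vecMulVec, finner_vecMulVec, finner_vecMulVec, dotProduct_comm y x]
  nlinarith

end Frobenius

section Spectral

variable {a b : ℕ}

lemma mulVec_dotProduct_mulVec_le (X : Matrix (Fin a) (Fin b) ℝ) (u : Fin b → ℝ) :
    (X *ᵥ u) ⬝ᵥ (X *ᵥ u) ≤ fnorm X ^ 2 * (u ⬝ᵥ u) := by
  rw [fnorm_sq, finner, Finset.sum_mul]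
  refine Finset.sum_le_sum fun i _ => ?_
  simpa [mulVec, dotProduct, sq] using Finset.sum_mul_sq_le_sq_mul_sq Finset.univ (X i) u

lemma exists_eigval_transpose_mul_self_eq (X : Matrix (Fin a) (Fin b) ℝ) (i : Fin b) :
    ∃ u : Fin b → ℝ, u ⬝ᵥ u = 1 ∧ eigval (Xᵀ * X) i = (X *ᵥ u) ⬝ᵥ (X *ᵥ u) := by
  have hXX : (Xᵀ * X).IsHermitian := by
    simpa using isHermitian_conjTranspose_mul_self X
  obtain ⟨j, hj⟩ : ∃ j, eigval (Xᵀ * X) i = hXX.eigenvalues j := by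
    rw [eigval, dif_pos hXX]
    exact ⟨_, rfl⟩
  have hu : ⇑(hXX.eigenvectorBasis j) ⬝ᵥ ⇑(hXX.eigenvectorBasis j) = 1 := by
    have := real_inner_self_eq_norm_sq (hXX.eigenvectorBasis j)
    rw [hXX.eigenvectorBasis.orthonormal.1 j, EuclideanSpace.inner_eq_star_dotProduct] at this
    simpa using this
  refine ⟨_, hu, ?_⟩
  rw [← transpose_mul_self_mulVec_dotProduct, hXX.mulVec_eigenvectorBasis j, smul_dotProduct, hu,
    hj, smul_eq_mul, mul_one]

lemma specNorm_le_fnorm (X : Matrix (Fin a) (Fin b) ℝ) : specNorm X ≤ fnorm X := by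
  rw [specNorm]
  split_ifs with hb
  · obtain ⟨u, hu, heig⟩ := exists_eigval_transpose_mul_self_eq X ⟨0, hb⟩
    rw [heig, Real.sqrt_le_left (fnorm_nonneg X)]
    simpa [hu] using mulVec_dotProduct_mulVec_le X u
  · exact fnorm_nonneg X

lemma exists_mulVec_dotProduct_eq_sigmaMin_sq (X : Matrix (Fin a) (Fin b) ℝ) (hb : 0 < b) :
    ∃ u : Fin b → ℝ, u ⬝ᵥ u = 1 ∧ (X *ᵥ u) ⬝ᵥ (X *ᵥ u) = sigmaMin X ^ 2 := by
  obtain ⟨u, hu, heig⟩ := exists_eigval_transpose_mul_self_eq X ⟨b - 1, by omega⟩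
  refine ⟨u, hu, ?_⟩
  rw [sigmaMin, dif_pos hb, heig,
    Real.sq_sqrt (by simpa using dotProduct_self_star_nonneg (X *ᵥ u))]

lemma sigmaMin_nonneg (X : Matrix (Fin a) (Fin b) ℝ) : 0 ≤ sigmaMin X := by
  unfold sigmaMin
  split_ifs <;> positivity

end Spectral

section OptimalityConditions

variable {n m r : ℕ} {A : Fin m → Matrix (Fin n) (Fin n) ℝ} {X : Matrix (Fin n) (Fin r) ℝ}

lemma enormE_calA_sq_eq_finner_matS (A : Fin m → Matrix (Fin n) (Fin n) ℝ)
    {E : Matrix (Fin n) (Fin n) ℝ} (hE : Eᵀ = E) :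
    enormE (calA A E) ^ 2 = finner (matS (((bigA A)ᵀ * bigA A) *ᵥ vecSq E)) E := by
  rw [finner_matS_of_transpose_eq _ hE, transpose_mul_self_mulVec_dotProduct,
    ← calA_eq_bigA_mulVec, enormE_sq]

lemma two_mul_finner_matS_mul_transpose_le {v : Fin (n * n) → ℝ} {c : ℝ} (hc : 0 ≤ c)
    (hfoc : enormE ((bigX X)ᵀ *ᵥ v) ≤ c * specNorm X) :
    2 * finner (matS v) (X * Xᵀ) ≤ c * fnorm X ^ 2 := by
  rw [bigX_transpose_mulVec, enormE_vecR, fnorm_smul, abs_two] at hfoc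
  calc 2 * finner (matS v) (X * Xᵀ) = 2 * finner (matS v * X) X := by
        rw [finner_mul_transpose]
    _ ≤ 2 * fnorm (matS v * X) * fnorm X := by
        rw [mul_assoc]
        exact mul_le_mul_of_nonneg_left (finner_le_fnorm_mul_fnorm _ _) zero_le_two
    _ ≤ c * specNorm X * fnorm X := mul_le_mul_of_nonneg_right hfoc (fnorm_nonneg X)
    _ ≤ c * fnorm X ^ 2 := by
        rw [sq, ← mul_assoc]
        exact mul_le_mul_of_nonneg_right
          (mul_le_mul_of_nonneg_left (specNorm_le_fnorm X) hc) (fnorm_nonneg X)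

lemma hessian_form_nonneg {v : Fin (n * n) → ℝ} {c : ℝ}
    (hsoc : ((2 : ℝ) • kronIdR r (matS v) + (bigX X)ᵀ * ((bigA A)ᵀ * bigA A) * bigX X +
      c • (1 : Matrix (Fin (n * r)) (Fin (n * r)) ℝ)).PosSemidef)
    (U : Matrix (Fin n) (Fin r) ℝ) :
    0 ≤ 2 * finner U (matS v * U) + enormE (calA A (X * Uᵀ + U * Xᵀ)) ^ 2 + c * finner U U := by
  have hmid : vecR U ⬝ᵥ (((bigX X)ᵀ * ((bigA A)ᵀ * bigA A) * bigX X) *ᵥ vecR U) =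
      enormE (calA A (X * Uᵀ + U * Xᵀ)) ^ 2 := by
    rw [show (bigX X)ᵀ * ((bigA A)ᵀ * bigA A) * bigX X = (bigA A * bigX X)ᵀ * (bigA A * bigX X) by
        simp only [transpose_mul, Matrix.mul_assoc],
      dotProduct_comm, transpose_mul_self_mulVec_dotProduct, ← mulVec_mulVec, bigX_mulVec_vecR,
      ← calA_eq_bigA_mulVec, enormE_sq]
  have hq := hsoc.dotProduct_mulVec_nonneg (vecR U)
  rwa [star_trivial, add_mulVec, add_mulVec, dotProduct_add, dotProduct_add, hmid, smul_mulVec,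
    smul_mulVec, one_mulVec, dotProduct_smul, dotProduct_smul, kronIdR_mulVec_vecR,
    vecR_dotProduct_vecR, vecR_dotProduct_vecR, smul_eq_mul, smul_eq_mul] at hq

lemma mul_transpose_add_mul_transpose_vecMulVec (z : Fin n → ℝ) (u : Fin r → ℝ) :
    X * (vecMulVec z u)ᵀ + vecMulVec z u * Xᵀ =
      vecMulVec (X *ᵥ u) z + vecMulVec z (X *ᵥ u) := by
  rw [transpose_vecMulVec, mul_vecMulVec, vecMulVec_mul, vecMul_transpose]

lemma posSemidef_add_smul_one_of_hessian_form_nonneg (hr : 0 < r) {G : Matrix (Fin n) (Fin n) ℝ}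
    (hG : Gᵀ = G) {c L d : ℝ} (hL : 0 ≤ L)
    (hRIP : ∀ W : Matrix (Fin n) (Fin n) ℝ, W.rank ≤ 2 →
      enormE (calA A W) ^ 2 ≤ L * fnorm W ^ 2)
    (hd : c / 2 + 2 * L * sigmaMin X ^ 2 ≤ d)
    (hhess : ∀ U : Matrix (Fin n) (Fin r) ℝ,
      0 ≤ 2 * finner U (G * U) + enormE (calA A (X * Uᵀ + U * Xᵀ)) ^ 2 + c * finner U U) :
    (G + d • (1 : Matrix (Fin n) (Fin n) ℝ)).PosSemidef := by
  obtain ⟨u, hu, hXu⟩ := exists_mulVec_dotProduct_eq_sigmaMin_sq X hr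
  refine PosSemidef.of_dotProduct_mulVec_nonneg ?_ fun z => ?_
  · simp [IsHermitian, transpose_add, hG]
  have hGU : finner (vecMulVec z u) (G * vecMulVec z u) = z ⬝ᵥ (G *ᵥ z) := by
    rw [mul_vecMulVec, finner_vecMulVec, hu, mul_one]
  have hUU : finner (vecMulVec z u) (vecMulVec z u) = z ⬝ᵥ z := by
    rw [finner_vecMulVec, hu, mul_one]
  have hW : enormE (calA A (X * (vecMulVec z u)ᵀ + vecMulVec z u * Xᵀ)) ^ 2 ≤
      4 * L * sigmaMin X ^ 2 * (z ⬝ᵥ z) := by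
    rw [mul_transpose_add_mul_transpose_vecMulVec]
    calc _ ≤ L * fnorm (vecMulVec (X *ᵥ u) z + vecMulVec z (X *ᵥ u)) ^ 2 :=
          hRIP _ (rank_vecMulVec_add_vecMulVec_le _ _ _ _)
      _ ≤ L * (4 * ((X *ᵥ u) ⬝ᵥ (X *ᵥ u)) * (z ⬝ᵥ z)) :=
          mul_le_mul_of_nonneg_left (fnorm_sq_vecMulVec_add_vecMulVec_le _ _) hL
      _ = 4 * L * sigmaMin X ^ 2 * (z ⬝ᵥ z) := by rw [hXu]; ring
  have hz : 0 ≤ z ⬝ᵥ z := by simpa using dotProduct_self_star_nonneg z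
  have hU := hhess (vecMulVec z u)
  rw [hGU, hUU] at hU
  rw [star_trivial, add_mulVec, dotProduct_add, smul_mulVec, one_mulVec, dotProduct_smul,
    smul_eq_mul]
  nlinarith [mul_le_mul_of_nonneg_right hd hz]

end OptimalityConditions

theorem statement18_general
    (n m r rs : ℕ) (hrs : 1 ≤ rs) (hrrs : rs ≤ r)
    (A : Fin m → Matrix (Fin n) (Fin n) ℝ)
    (Mstar : Matrix (Fin n) (Fin n) ℝ) (hM : Mstar.PosSemidef) (hrank : Mstar.rank = rs)
    (ε κ δ : ℝ) (hε : 0 < ε) (hκ : 0 ≤ κ) (hδ0 : 0 ≤ δ)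
    (hRIP : RIP A δ (r + rs))
    (Xhat : Matrix (Fin n) (Fin r) ℝ)
    (hσ : sigmaMin Xhat ≤ Real.sqrt ((ε + κ / 2) / (1 + δ)))
    (hfoc : enormE (Matrix.mulVec (bigX Xhat)ᵀ
        (Matrix.mulVec ((bigA A)ᵀ * bigA A) (vecSq (Xhat * Xhatᵀ - Mstar)))) ≤
      (2 * ε + κ) * specNorm Xhat)
    (hsoc : Matrix.PosSemidef
      ((2 : ℝ) • kronIdR r (matS (Matrix.mulVec ((bigA A)ᵀ * bigA A)
          (vecSq (Xhat * Xhatᵀ - Mstar)))) +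
        (bigX Xhat)ᵀ * ((bigA A)ᵀ * bigA A) * bigX Xhat +
        (2 * ε + κ) • (1 : Matrix (Fin (n * r)) (Fin (n * r)) ℝ))) :
    (1 - δ) * fnorm (Xhat * Xhatᵀ - Mstar) ^ 2 ≤
      (ε + κ / 2) * fnorm Xhat ^ 2 + (3 * ε + 3 * κ / 2) * Matrix.trace Mstar := by
  have hr : 0 < r := by omega
  set E := Xhat * Xhatᵀ - Mstar
  set G := matS (((bigA A)ᵀ * bigA A) *ᵥ vecSq E)
  have hMt : Mstarᵀ = Mstar := by simpa using hM.1.eq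
  have hEt : Eᵀ = E := by simp [E, transpose_sub, transpose_mul, hMt]
  have hrankE : E.rank ≤ r + rs :=
    (rank_sub_le _ _).trans (add_le_add ((rank_mul_le_left _ _).trans (rank_le_width _)) hrank.le)
  have hσ2 : (1 + δ) * sigmaMin Xhat ^ 2 ≤ ε + κ / 2 := by
    have hq : 0 ≤ (ε + κ / 2) / (1 + δ) := by positivity
    have := pow_le_pow_left₀ (sigmaMin_nonneg Xhat) hσ 2
    rw [Real.sq_sqrt hq, le_div_iff₀ (by linarith)] at this
    linarith
  have hfirst : 2 * finner G (Xhat * Xhatᵀ) ≤ (2 * ε + κ) * fnorm Xhat ^ 2 :=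
    two_mul_finner_matS_mul_transpose_le (by positivity) hfoc
  have hpsd : (G + (3 * ε + 3 * κ / 2) • (1 : Matrix (Fin n) (Fin n) ℝ)).PosSemidef :=
    posSemidef_add_smul_one_of_hessian_form_nonneg hr (matS_transpose _) (by linarith)
      (fun W hW => (hRIP W (by omega)).2) (by linarith) (hessian_form_nonneg hsoc)
  have htrace := finner_nonneg_of_posSemidef hpsd hM
  rw [finner_add_smul_one] at htrace
  calc (1 - δ) * fnorm E ^ 2 ≤ enormE (calA A E) ^ 2 := (hRIP E hrankE).1
    _ = finner G (Xhat * Xhatᵀ) - finner G Mstar := by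
        rw [enormE_calA_sq_eq_finner_matS A hEt, finner_sub_right]
    _ ≤ (ε + κ / 2) * fnorm Xhat ^ 2 + (3 * ε + 3 * κ / 2) * Mstar.trace := by linarith

/-- key intermediate inequality in the proof of Lemma 2. -/
theorem statement18
    (n m r rs : ℕ) (hrs : 1 ≤ rs) (hrrs : rs ≤ r)
    (A : Fin m → Matrix (Fin n) (Fin n) ℝ)
    (Mstar : Matrix (Fin n) (Fin n) ℝ) (hM : Mstar.PosSemidef) (hrank : Mstar.rank = rs)
    (ε κ δ : ℝ) (hε : 0 < ε) (hκ : 0 ≤ κ) (hδ0 : 0 ≤ δ) (hδ1 : δ < 1)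
    (hRIP : RIP A δ (r + rs))
    (Xhat : Matrix (Fin n) (Fin r) ℝ)
    (hσ : sigmaMin Xhat ≤ Real.sqrt ((ε + κ / 2) / (1 + δ)))
    (hfoc : enormE (Matrix.mulVec (bigX Xhat)ᵀ
        (Matrix.mulVec ((bigA A)ᵀ * bigA A) (vecSq (Xhat * Xhatᵀ - Mstar)))) ≤
      (2 * ε + κ) * specNorm Xhat)
    (hsoc : Matrix.PosSemidef
      ((2 : ℝ) • kronIdR r (matS (Matrix.mulVec ((bigA A)ᵀ * bigA A)
          (vecSq (Xhat * Xhatᵀ - Mstar)))) +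
        (bigX Xhat)ᵀ * ((bigA A)ᵀ * bigA A) * bigX Xhat +
        (2 * ε + κ) • (1 : Matrix (Fin (n * r)) (Fin (n * r)) ℝ))) :
    (1 - δ) * fnorm (Xhat * Xhatᵀ - Mstar) ^ 2 ≤
      (ε + κ / 2) * fnorm Xhat ^ 2 + (3 * ε + 3 * κ / 2) * Matrix.trace Mstar :=
  statement18_general n m r rs hrs hrrs A Mstar hM hrank ε κ δ hε hκ hδ0 hRIP Xhat hσ hfoc hsoc
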